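/- Let q : X → Y be a quotient map between Banach spaces and (yₙ*) a bounded sequence in Y*. Then δ_w(q* yₙ*) = δ_w(yₙ*) and δ_{w*}(q* yₙ*) = δ_{w*}(yₙ*), where (q* yₙ*) is the corresponding sequence in X*. -/

import Mathlib

open Filter Metric Topology

/-- Measure of weak non-cauchyness of a sequence in the dual:
`δ_w(f) = sup_{F ∈ B_{X**}} inf_n sup_{k,l ≥ n} |F(f k) - F(f l)|`. -/
noncomputable def deltaW {X : Type*} [NormedAddCommGroup X] [NormedSpace ℝ X]
    (f : ℕ → X →L[ℝ] ℝ) : ℝ :=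
  ⨆ F : (closedBall (0 : (X →L[ℝ] ℝ) →L[ℝ] ℝ) 1),
    ⨅ n : ℕ, ⨆ p : {p : ℕ × ℕ // n ≤ p.1 ∧ n ≤ p.2},
      |F.1 (f p.1.1) - F.1 (f p.1.2)|

/-- Measure of weak* non-cauchyness of a sequence in the dual:
`δ_{w*}(f) = sup_{x ∈ B_X} inf_n sup_{k,l ≥ n} |f k x - f l x|`. -/
noncomputable def deltaWStar {X : Type*} [NormedAddCommGroup X] [NormedSpace ℝ X]
    (f : ℕ → X →L[ℝ] ℝ) : ℝ :=
  ⨆ x : (closedBall (0 : X) 1),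
    ⨅ n : ℕ, ⨆ p : {p : ℕ × ℕ // n ≤ p.1 ∧ n ≤ p.2},
      |f p.1.1 x.1 - f p.1.2 x.1|

/-- `X` is `c`-Grothendieck if `δ_w(f) ≤ c · δ_{w*}(f)` for every bounded sequence `f` in `X*`. -/
def IsCGrothendieck (c : ℝ) (X : Type*) [NormedAddCommGroup X] [NormedSpace ℝ X] : Prop :=
  ∀ f : ℕ → X →L[ℝ] ℝ, Bornology.IsBounded (Set.range f) → deltaW f ≤ c * deltaWStar f

/-!
Since `q` maps the open unit ball onto the open unit ball, `q*` is an isometry, so by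
Hahn–Banach `F ↦ F ∘ q*` maps the closed unit ball of `X**` onto that of `Y**`: the two suprema
defining `δ_w` run over the same set of numbers. For `δ_{w*}`, the set `q (B_X)` lies between
the open and the closed unit ball of `Y`, and `y ↦ tailOscillation (n ↦ yₙ* y)` is positively
homogeneous, so its supremum over `q (B_X)` equals its supremum over `B_Y`.
-/

open Set

noncomputable def tailOscillation (a : ℕ → ℝ) : ℝ :=
  ⨅ n : ℕ, ⨆ p : {p : ℕ × ℕ // n ≤ p.1 ∧ n ≤ p.2}, |a p.1.1 - a p.1.2|

theorem tailOscillation_const_mul {t : ℝ} (ht : 0 ≤ t) (a : ℕ → ℝ) :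
    tailOscillation (fun n => t * a n) = t * tailOscillation a := by
  simp only [tailOscillation, Real.mul_iInf_of_nonneg ht, Real.mul_iSup_of_nonneg ht, ← mul_sub,
    abs_mul, abs_of_nonneg ht]

theorem deltaW_eq_sSup_image {X : Type*} [NormedAddCommGroup X] [NormedSpace ℝ X]
    (f : ℕ → X →L[ℝ] ℝ) :
    deltaW f = sSup ((fun F : (X →L[ℝ] ℝ) →L[ℝ] ℝ => tailOscillation fun n => F (f n)) ''
      closedBall 0 1) := by
  rw [sSup_image']
  rfl

theorem deltaWStar_eq_sSup_image {X : Type*} [NormedAddCommGroup X] [NormedSpace ℝ X]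
    (f : ℕ → X →L[ℝ] ℝ) :
    deltaWStar f = sSup ((fun x => tailOscillation fun n => f n x) '' closedBall 0 1) := by
  rw [sSup_image']
  rfl

theorem sSup_image_eq_of_ball_subset_of_subset_closedBall {E : Type*} [NormedAddCommGroup E]
    [NormedSpace ℝ E] {φ : E → ℝ} (hφ : ∀ t : ℝ, 0 ≤ t → ∀ y, φ (t • y) = t * φ y) {S : Set E}
    (hball : ball 0 1 ⊆ S) (hS : S ⊆ closedBall 0 1) :
    sSup (φ '' S) = sSup (φ '' closedBall 0 1) := by
  have hscale : ∀ y ∈ closedBall (0 : E) 1, ∀ t ∈ Ico (0 : ℝ) 1, t * φ y ∈ φ '' S := by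
    intro y hy t ht
    refine ⟨t • y, hball ?_, hφ t ht.1 y⟩
    rw [mem_ball_zero_iff, norm_smul, Real.norm_of_nonneg ht.1]
    exact (mul_le_of_le_one_right ht.1 (mem_closedBall_zero_iff.1 hy)).trans_lt ht.2
  -- An unbounded `φ` makes both suprema the junk value `0`.
  by_cases hbdd : BddAbove (φ '' closedBall 0 1)
  · have hbddS : BddAbove (φ '' S) := hbdd.mono (image_mono hS)
    refine le_antisymm (csSup_le_csSup hbdd ((nonempty_ball.2 one_pos).mono hball |>.image φ)
      (image_mono hS)) (csSup_le ((nonempty_closedBall.2 zero_le_one).image φ) ?_)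
    rintro - ⟨y, hy, rfl⟩
    have hlim : Tendsto (fun t : ℝ => t * φ y) (𝓝[<] 1) (𝓝 (φ y)) := by
      simpa using (tendsto_id.mul_const (φ y)).mono_left (nhdsWithin_le_nhds (a := (1 : ℝ)))
    refine le_of_tendsto hlim ?_
    filter_upwards [Ico_mem_nhdsLT zero_lt_one] with t ht
    exact le_csSup hbddS (hscale y hy t ht)
  · have hunbdd : ¬BddAbove (φ '' S) := by
      rintro ⟨M, hM⟩
      refine hbdd ⟨2 * M, ?_⟩
      rintro - ⟨y, hy, rfl⟩
      have := hM (hscale y hy (1 / 2) ⟨by norm_num, by norm_num⟩)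
      linarith
    rw [Real.sSup_of_not_bddAbove hbdd, Real.sSup_of_not_bddAbove hunbdd]

theorem LinearIsometry.exists_extension_norm_eq {𝕜 E F : Type*} [RCLike 𝕜]
    [NormedAddCommGroup E] [NormedSpace 𝕜 E] [NormedAddCommGroup F] [NormedSpace 𝕜 F]
    (T : E →ₗᵢ[𝕜] F) (f : StrongDual 𝕜 E) :
    ∃ g : StrongDual 𝕜 F, g.comp T.toContinuousLinearMap = f ∧ ‖g‖ = ‖f‖ := by
  obtain ⟨g, hgf, hg⟩ := _root_.exists_extension_norm_eq (LinearMap.range T.toLinearMap)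
    (f.comp (T.equivRange.symm : LinearMap.range T.toLinearMap →L[𝕜] E))
  refine ⟨g, ?_, hg.trans (f.opNorm_comp_linearIsometryEquiv _)⟩
  ext x
  have hx : T.equivRange x = ⟨T x, LinearMap.mem_range_self _ x⟩ := rfl
  simpa [← hx] using hgf (T.equivRange x)

theorem LinearIsometry.image_dual_closedBall {𝕜 E F : Type*} [RCLike 𝕜]
    [NormedAddCommGroup E] [NormedSpace 𝕜 E] [NormedAddCommGroup F] [NormedSpace 𝕜 F]
    (T : E →ₗᵢ[𝕜] F) (r : ℝ) :
    (fun g : StrongDual 𝕜 F => g.comp T.toContinuousLinearMap) '' closedBall 0 r =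
      closedBall 0 r := by
  ext f
  simp only [mem_image, mem_closedBall_zero_iff]
  constructor
  · rintro ⟨g, hg, rfl⟩
    calc ‖g.comp T.toContinuousLinearMap‖ ≤ ‖g‖ * ‖T.toContinuousLinearMap‖ := g.opNorm_comp_le _
      _ ≤ r * 1 := mul_le_mul hg T.norm_toContinuousLinearMap_le (norm_nonneg _)
          ((norm_nonneg g).trans hg)
      _ = r := mul_one r
  · intro hf
    obtain ⟨g, hgf, hg⟩ := T.exists_extension_norm_eq f
    exact ⟨g, hg.trans_le hf, hgf⟩

section QuotientMap

variable {X Y : Type*} [NormedAddCommGroup X] [NormedAddCommGroup Y]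

theorem ContinuousLinearMap.opNorm_comp_of_image_ball_eq {𝕜 Z : Type*}
    [DenselyNormedField 𝕜] [NormedSpace 𝕜 X] [NormedSpace 𝕜 Y] [NormedAddCommGroup Z]
    [NormedSpace 𝕜 Z] {q : X →L[𝕜] Y} (hq : q '' ball 0 1 = ball 0 1) (h : Y →L[𝕜] Z) :
    ‖h.comp q‖ = ‖h‖ := by
  rw [← sSup_unit_ball_eq_norm, ← sSup_unit_ball_eq_norm, ← hq, image_image]
  rfl

noncomputable def ContinuousLinearMap.precompIsometry {𝕜 : Type*} (Z : Type*)
    [DenselyNormedField 𝕜] [NormedSpace 𝕜 X] [NormedSpace 𝕜 Y] [NormedAddCommGroup Z]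
    [NormedSpace 𝕜 Z] (q : X →L[𝕜] Y) (hq : q '' ball 0 1 = ball 0 1) :
    (Y →L[𝕜] Z) →ₗᵢ[𝕜] (X →L[𝕜] Z) where
  toLinearMap := ((ContinuousLinearMap.compL 𝕜 X Y Z).flip q).toLinearMap
  norm_map' := opNorm_comp_of_image_ball_eq hq

theorem ContinuousLinearMap.image_closedBall_subset_of_image_ball_subset [NormedSpace ℝ X]
    [NormedSpace ℝ Y] {q : X →L[ℝ] Y} (hq : q '' ball 0 1 ⊆ ball 0 1) :
    q '' closedBall 0 1 ⊆ closedBall 0 1 := by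
  rw [← closure_ball (0 : X) one_ne_zero, ← closure_ball (0 : Y) one_ne_zero]
  exact (image_closure_subset_closure_image q.continuous).trans (closure_mono hq)

end QuotientMap

theorem deltaW_deltaWStar_comp_quotient_general {X Y : Type*} [NormedAddCommGroup X] [NormedSpace ℝ X]
    [NormedAddCommGroup Y] [NormedSpace ℝ Y]
    (q : X →L[ℝ] Y)
    (hq : q '' ball (0 : X) 1 = ball (0 : Y) 1)
    (g : ℕ → Y →L[ℝ] ℝ) :
    deltaW (fun n => (g n).comp q) = deltaW g ∧
      deltaWStar (fun n => (g n).comp q) = deltaWStar g := by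
  constructor
  · rw [deltaW_eq_sSup_image, deltaW_eq_sSup_image,
      ← (q.precompIsometry ℝ hq).image_dual_closedBall 1, image_image]
    rfl
  · have hhom : ∀ t : ℝ, 0 ≤ t → ∀ y, (tailOscillation fun n => g n (t • y)) =
        t * tailOscillation fun n => g n y := by
      intro t ht y
      simp only [map_smul, smul_eq_mul, tailOscillation_const_mul ht]
    rw [deltaWStar_eq_sSup_image, deltaWStar_eq_sSup_image,
      ← sSup_image_eq_of_ball_subset_of_subset_closedBall
      (φ := fun y => tailOscillation fun n => g n y) hhom
      (hq ▸ image_mono ball_subset_closedBall)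
      (q.image_closedBall_subset_of_image_ball_subset hq.subset), image_image]
    rfl

/-- If `q : X → Y` is a quotient map between Banach spaces and `(g n)` is a bounded sequence
in `Y*`, then the sequence `(q* (g n)) = (g n ∘ q)` in `X*` satisfies
`δ_w(q* g) = δ_w(g)` and `δ_{w*}(q* g) = δ_{w*}(g)`. -/
theorem deltaW_deltaWStar_comp_quotient {X Y : Type*} [NormedAddCommGroup X] [NormedSpace ℝ X]
    [CompleteSpace X] [NormedAddCommGroup Y] [NormedSpace ℝ Y] [CompleteSpace Y]
    (q : X →L[ℝ] Y) (hsurj : Function.Surjective q)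
    (hq : q '' ball (0 : X) 1 = ball (0 : Y) 1)
    (g : ℕ → Y →L[ℝ] ℝ) (hg : Bornology.IsBounded (Set.range g)) :
    deltaW (fun n => (g n).comp q) = deltaW g ∧
      deltaWStar (fun n => (g n).comp q) = deltaWStar g :=
  deltaW_deltaWStar_comp_quotient_general q hq g
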